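/- Let f = Σ_{i=1}^γ a_i·1_{A_i} be a nonzero Dirac comb on Z_N^d (the A_i disjoint), and suppose f̂ is supported in Σ. If A_1 satisfies Σ_{x ∈ Z_N^d} |f(x)|² ≤ γ · Σ_{x ∈ A_1} |f(x)|² (i.e., A_1 is a 2-effective support of f), then |A_1|·|Σ| ≥ N^d/γ. -/
import Mathlib

open Finset

noncomputable def ft {N d : ℕ} [NeZero N] (f : (Fin d → ZMod N) → ℂ) (m : Fin d → ZMod N) : ℂ :=
  ((N : ℂ) ^ d)⁻¹ * ∑ x : Fin d → ZMod N,
    Complex.exp (-(2 * Real.pi * Complex.I * ((∑ i, x i * m i).val : ℂ) / N)) * f x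

noncomputable def ch {N d : ℕ} (x m : Fin d → ZMod N) : ℂ :=
  Complex.exp (2 * Real.pi * Complex.I * ((∑ i, x i * m i).val : ℂ) / N)

noncomputable def ee {N : ℕ} [NeZero N] (s : ZMod N) : ℂ :=
  Complex.exp (2 * Real.pi * Complex.I * (s.val : ℂ) / N)

lemma ee_add {N : ℕ} [NeZero N] (s t : ZMod N) : ee (s + t) = ee s * ee t := by
  have hN : (N : ℂ) ≠ 0 := Nat.cast_ne_zero.2 (NeZero.ne N)
  unfold ee
  rw [← Complex.exp_add]
  have h : s.val + t.val = (s + t).val + N * ((s.val + t.val) / N) := by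
    rw [ZMod.val_add]
    exact (Nat.mod_add_div _ _).symm
  have h2 : ((s.val : ℂ) + t.val) = ((s + t).val : ℂ) + N * ((s.val + t.val) / N : ℕ) := by
    exact_mod_cast congrArg (fun n : ℕ => (n : ℂ)) h
  have hNq : (N : ℂ) * ((s.val + t.val) / N : ℕ) / N = ((s.val + t.val) / N : ℕ) :=
    mul_div_cancel_left₀ _ hN
  have key : 2 * Real.pi * Complex.I * ((s.val : ℂ)) / N + 2 * Real.pi * Complex.I * (t.val : ℂ) / N
      = 2 * Real.pi * Complex.I * (((s + t).val : ℂ)) / N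
        + ((((s.val + t.val) / N : ℕ) : ℤ) : ℂ) * (2 * Real.pi * Complex.I) := by
    rw [Int.cast_natCast]
    linear_combination (2 * (Real.pi : ℂ) * Complex.I / N) * h2
      + (2 * (Real.pi : ℂ) * Complex.I) * hNq
  rw [key, Complex.exp_add, Complex.exp_int_mul_two_pi_mul_I, mul_one]

lemma ee_zero {N : ℕ} [NeZero N] : ee (0 : ZMod N) = 1 := by
  simp [ee]

lemma ee_eq_one_iff {N : ℕ} [NeZero N] (s : ZMod N) : ee s = 1 ↔ s = 0 := by
  constructor
  · intro h
    rw [ee, Complex.exp_eq_one_iff] at h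
    obtain ⟨n, hn⟩ := h
    have hN : (N : ℂ) ≠ 0 := Nat.cast_ne_zero.2 (NeZero.ne N)
    have hI : (2 * (Real.pi : ℂ) * Complex.I) ≠ 0 := by
      simp [Real.pi_ne_zero, Complex.I_ne_zero, Complex.ofReal_ne_zero]
    rw [div_eq_iff hN] at hn
    have h2 : (s.val : ℂ) = (n : ℂ) * N :=
      mul_left_cancel₀ hI (by linear_combination hn)
    have h3 : (s.val : ℤ) = n * N := by exact_mod_cast h2
    have hv : s.val < N := ZMod.val_lt s
    have hNpos : (0:ℤ) < N := by exact_mod_cast Nat.pos_of_ne_zero (NeZero.ne N)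
    have hn0 : n = 0 := by
      rcases lt_trichotomy n 0 with h' | h' | h'
      · nlinarith [Int.ofNat_nonneg s.val]
      · exact h'
      · nlinarith [(by exact_mod_cast hv : (s.val : ℤ) < N)]
    rw [hn0, zero_mul] at h3
    have hval : s.val = 0 := by exact_mod_cast h3
    exact (ZMod.val_eq_zero s).1 hval
  · rintro rfl; exact ee_zero

lemma ee_inv {N : ℕ} [NeZero N] (s : ZMod N) : (ee s)⁻¹ = ee (-s) :=
  inv_eq_of_mul_eq_one_right (by rw [← ee_add]; simp [ee_zero])

lemma ee_norm {N : ℕ} [NeZero N] (s : ZMod N) : ‖ee s‖ = 1 := by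
  have h : 2 * (Real.pi : ℂ) * Complex.I * (s.val : ℂ) / N
      = ((2 * Real.pi * s.val / N : ℝ) : ℂ) * Complex.I := by push_cast; ring
  rw [ee, h]
  exact Complex.norm_exp_ofReal_mul_I _

lemma sum_ee {N d : ℕ} [NeZero N] (z : Fin d → ZMod N) :
    ∑ x : Fin d → ZMod N, ee (∑ i, x i * z i) = if z = 0 then ((N : ℂ) ^ d) else 0 := by
  by_cases hz : z = 0
  · subst hz
    simp [ee_zero, Finset.card_univ, ZMod.card]
  · rw [if_neg hz]
    obtain ⟨j, hj⟩ := Function.ne_iff.1 hz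
    set c : Fin d → ZMod N := Pi.single j 1 with hc
    have hshift : ∑ x : Fin d → ZMod N, ee (∑ i, x i * z i)
        = ∑ x : Fin d → ZMod N, ee (∑ i, (x i + c i) * z i) :=
      (Fintype.sum_equiv (Equiv.addRight c)
        (fun x => ee (∑ i, (x i + c i) * z i)) (fun x => ee (∑ i, x i * z i))
        (fun x => rfl)).symm
    have hcz : ∀ x : Fin d → ZMod N, ∑ i, (x i + c i) * z i = (∑ i, x i * z i) + z j := by
      intro x
      have hs : ∑ i, c i * z i = z j := by
        rw [hc, Finset.sum_eq_single j]
        · simp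
        · intro b _ hb; simp [Pi.single_apply, hb]
        · simp
      calc ∑ i, (x i + c i) * z i = (∑ i, x i * z i) + ∑ i, c i * z i := by
            rw [← Finset.sum_add_distrib]; exact Finset.sum_congr rfl fun i _ => add_mul _ _ _
        _ = (∑ i, x i * z i) + z j := by rw [hs]
    have heq : ∑ x : Fin d → ZMod N, ee (∑ i, x i * z i)
        = (∑ x : Fin d → ZMod N, ee (∑ i, x i * z i)) * ee (z j) := by
      conv_lhs => rw [hshift]
      rw [Finset.sum_mul]
      exact Finset.sum_congr rfl fun x _ => by rw [hcz x, ee_add]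
    have hmul : (∑ x : Fin d → ZMod N, ee (∑ i, x i * z i)) * (1 - ee (z j)) = 0 := by
      linear_combination heq
    rcases mul_eq_zero.1 hmul with h | h
    · exact h
    · exact absurd ((ee_eq_one_iff _).1 (by linear_combination -h)) hj

lemma ft_eq {N d : ℕ} [NeZero N] (f : (Fin d → ZMod N) → ℂ) (m : Fin d → ZMod N) :
    ft f m = ((N : ℂ) ^ d)⁻¹ * ∑ x : Fin d → ZMod N, (ee (∑ i, x i * m i))⁻¹ * f x := by
  unfold ft
  congr 1
  refine Finset.sum_congr rfl fun x _ => ?_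
  rw [ee, ← Complex.exp_neg]

lemma ch_eq {N d : ℕ} [NeZero N] (x m : Fin d → ZMod N) : ch x m = ee (∑ i, x i * m i) := rfl

lemma inversion {N d : ℕ} [NeZero N] (f : (Fin d → ZMod N) → ℂ) (x : Fin d → ZMod N) :
    ∑ m : Fin d → ZMod N, ft f m * ch x m = f x := by
  have hNd : ((N : ℂ) ^ d) ≠ 0 := pow_ne_zero _ (Nat.cast_ne_zero.2 (NeZero.ne N))
  calc ∑ m : Fin d → ZMod N, ft f m * ch x m
      = ((N : ℂ) ^ d)⁻¹ * ∑ m : Fin d → ZMod N, ∑ y : Fin d → ZMod N,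
          (ee (∑ i, y i * m i))⁻¹ * f y * ee (∑ i, x i * m i) := by
        rw [Finset.mul_sum]
        refine Finset.sum_congr rfl fun m _ => ?_
        rw [ft_eq, ch_eq, mul_assoc, Finset.sum_mul]
    _ = ((N : ℂ) ^ d)⁻¹ * ∑ y : Fin d → ZMod N, f y *
          ∑ m : Fin d → ZMod N, ee (∑ i, m i * (x i - y i)) := by
        rw [Finset.sum_comm]
        congr 1
        refine Finset.sum_congr rfl fun y _ => ?_
        rw [Finset.mul_sum]
        refine Finset.sum_congr rfl fun m _ => ?_
        have hsum : (∑ i, x i * m i) + -(∑ i, y i * m i) = ∑ i, m i * (x i - y i) := by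
          rw [← Finset.sum_neg_distrib, ← Finset.sum_add_distrib]
          exact Finset.sum_congr rfl fun i _ => by ring
        rw [ee_inv, ← hsum, ee_add]
        ring
    _ = ((N : ℂ) ^ d)⁻¹ * ∑ y : Fin d → ZMod N, f y *
          (if (fun i => x i - y i) = 0 then ((N : ℂ) ^ d) else 0) := by
        congr 1
        exact Finset.sum_congr rfl fun y _ => by rw [sum_ee (fun i => x i - y i)]
    _ = ((N : ℂ) ^ d)⁻¹ * (f x * (N : ℂ) ^ d) := by
        congr 1
        rw [Finset.sum_eq_single x]
        · rw [if_pos (by funext i; simp)]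
        · intro y _ hy
          rw [if_neg, mul_zero]
          intro h0
          exact hy (funext fun i => by
            have := congrFun h0 i
            simp only [Pi.zero_apply, sub_eq_zero] at this
            exact this.symm)
        · intro hx; exact absurd (Finset.mem_univ x) hx
    _ = f x := by field_simp

lemma conj_ee {N : ℕ} [NeZero N] (s : ZMod N) : (starRingEnd ℂ) (ee s) = (ee s)⁻¹ := by
  have h1 : ee s * (starRingEnd ℂ) (ee s) = 1 := by
    rw [Complex.mul_conj', ee_norm]; norm_num
  exact (inv_eq_of_mul_eq_one_right h1).symm

lemma conj_ft {N d : ℕ} [NeZero N] (f : (Fin d → ZMod N) → ℂ) (m : Fin d → ZMod N) :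
    (starRingEnd ℂ) (ft f m) = ((N : ℂ) ^ d)⁻¹ *
      ∑ y : Fin d → ZMod N, (starRingEnd ℂ) (f y) * ee (∑ i, y i * m i) := by
  rw [ft_eq, map_mul, map_inv₀, map_pow, Complex.conj_natCast, map_sum]
  congr 1
  refine Finset.sum_congr rfl fun y _ => ?_
  rw [map_mul, map_inv₀, conj_ee, inv_inv, mul_comm]

lemma parseval {N d : ℕ} [NeZero N] (f : (Fin d → ZMod N) → ℂ) :
    ∑ m : Fin d → ZMod N, (starRingEnd ℂ) (ft f m) * ft f m
      = ((N : ℂ) ^ d)⁻¹ * ∑ x : Fin d → ZMod N, (starRingEnd ℂ) (f x) * f x := by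
  calc ∑ m : Fin d → ZMod N, (starRingEnd ℂ) (ft f m) * ft f m
      = ((N : ℂ) ^ d)⁻¹ * ∑ m : Fin d → ZMod N, ∑ y : Fin d → ZMod N,
          (starRingEnd ℂ) (f y) * (ft f m * ch y m) := by
        rw [Finset.mul_sum]
        refine Finset.sum_congr rfl fun m _ => ?_
        rw [conj_ft, mul_assoc, Finset.sum_mul]
        congr 1
        exact Finset.sum_congr rfl fun y _ => by rw [ch_eq]; ring
    _ = ((N : ℂ) ^ d)⁻¹ * ∑ y : Fin d → ZMod N,
          (starRingEnd ℂ) (f y) * ∑ m : Fin d → ZMod N, ft f m * ch y m := by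
        rw [Finset.sum_comm]
        congr 1
        exact Finset.sum_congr rfl fun y _ => by rw [Finset.mul_sum]
    _ = ((N : ℂ) ^ d)⁻¹ * ∑ x : Fin d → ZMod N, (starRingEnd ℂ) (f x) * f x := by
        congr 1
        exact Finset.sum_congr rfl fun y _ => by rw [inversion]

lemma parseval_real {N d : ℕ} [NeZero N] (f : (Fin d → ZMod N) → ℂ) :
    ∑ m : Fin d → ZMod N, ‖ft f m‖ ^ 2 = (((N : ℝ) ^ d)⁻¹) * ∑ x : Fin d → ZMod N, ‖f x‖ ^ 2 := by
  have hz : ∀ z : ℂ, (starRingEnd ℂ) z * z = ((‖z‖ ^ 2 : ℝ) : ℂ) := fun z => by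
    rw [mul_comm, Complex.mul_conj']; push_cast; ring
  have h := parseval f
  simp only [hz] at h
  apply Complex.ofReal_injective
  push_cast
  exact_mod_cast h

theorem stmt5 {N d γ : ℕ} [NeZero N] (hγ : 0 < γ)
    (a : Fin γ → ℂ) (A : Fin γ → Finset (Fin d → ZMod N))
    (hdisj : ∀ i j, i ≠ j → Disjoint (A i) (A j))
    (f : (Fin d → ZMod N) → ℂ)
    (hf : ∀ x, f x = ∑ i, if x ∈ A i then a i else 0)
    (hne : f ≠ 0)
    (Sig : Finset (Fin d → ZMod N)) (hSig : ∀ m ∉ Sig, ft f m = 0)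
    (heff : ∑ x : Fin d → ZMod N, ‖f x‖ ^ 2 ≤ (γ : ℝ) * ∑ x ∈ A ⟨0, hγ⟩, ‖f x‖ ^ 2) :
    (N : ℝ) ^ d / γ ≤ ((A ⟨0, hγ⟩).card : ℝ) * Sig.card := by
  classical
  set A0 := A ⟨0, hγ⟩ with hA0
  set S : ℝ := ∑ x : Fin d → ZMod N, ‖f x‖ ^ 2 with hSdef
  have hNpos : 0 < N := Nat.pos_of_ne_zero (NeZero.ne N)
  have hNd : (0:ℝ) < (N:ℝ) ^ d := by positivity
  have hSpos : 0 < S := by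
    obtain ⟨x, hx⟩ : ∃ x, f x ≠ 0 := by
      by_contra h; push_neg at h; exact hne (funext h)
    exact Finset.sum_pos' (fun y _ => by positivity) ⟨x, Finset.mem_univ x, pow_pos (norm_pos_iff.2 hx) 2⟩
  have hbound : ∀ x, ‖f x‖ ^ 2 ≤ (Sig.card : ℝ) * (((N:ℝ) ^ d)⁻¹ * S) := by
    intro x
    have hfx : f x = ∑ m ∈ Sig, ft f m * ch x m := by
      rw [← inversion f x]
      exact (Finset.sum_subset (Finset.subset_univ Sig)
        (fun m _ hm => by rw [hSig m hm, zero_mul])).symm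
    have h1 : ‖f x‖ ≤ ∑ m ∈ Sig, ‖ft f m‖ := by
      rw [hfx]
      refine (norm_sum_le _ _).trans (Finset.sum_le_sum fun m _ => ?_)
      rw [norm_mul, ch_eq, ee_norm, mul_one]
    have h4 : ‖f x‖ ^ 2 ≤ (∑ m ∈ Sig, ‖ft f m‖) ^ 2 :=
      pow_le_pow_left₀ (norm_nonneg _) h1 2
    have h2 : (∑ m ∈ Sig, ‖ft f m‖) ^ 2 ≤ (Sig.card : ℝ) * ∑ m ∈ Sig, ‖ft f m‖ ^ 2 :=
      sq_sum_le_card_mul_sum_sq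
    have h3 : ∑ m ∈ Sig, ‖ft f m‖ ^ 2 ≤ ∑ m : Fin d → ZMod N, ‖ft f m‖ ^ 2 :=
      Finset.sum_le_sum_of_subset_of_nonneg (Finset.subset_univ _) (fun m _ _ => by positivity)
    calc ‖f x‖ ^ 2 ≤ (∑ m ∈ Sig, ‖ft f m‖) ^ 2 := h4
      _ ≤ (Sig.card : ℝ) * ∑ m ∈ Sig, ‖ft f m‖ ^ 2 := h2
      _ ≤ (Sig.card : ℝ) * ∑ m : Fin d → ZMod N, ‖ft f m‖ ^ 2 :=
          mul_le_mul_of_nonneg_left h3 (Nat.cast_nonneg _)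
      _ = (Sig.card : ℝ) * (((N:ℝ) ^ d)⁻¹ * S) := by rw [parseval_real]
  have hA : ∑ x ∈ A0, ‖f x‖ ^ 2 ≤ (A0.card : ℝ) * ((Sig.card : ℝ) * (((N:ℝ) ^ d)⁻¹ * S)) := by
    calc ∑ x ∈ A0, ‖f x‖ ^ 2 ≤ ∑ _x ∈ A0, (Sig.card : ℝ) * (((N:ℝ) ^ d)⁻¹ * S) :=
          Finset.sum_le_sum fun x _ => hbound x
      _ = (A0.card : ℝ) * ((Sig.card : ℝ) * (((N:ℝ) ^ d)⁻¹ * S)) := by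
          rw [Finset.sum_const, nsmul_eq_mul]
  have hmain : S ≤ (γ : ℝ) * ((A0.card : ℝ) * ((Sig.card : ℝ) * (((N:ℝ) ^ d)⁻¹ * S))) :=
    heff.trans (mul_le_mul_of_nonneg_left hA (Nat.cast_nonneg γ))
  have hinv : (N:ℝ) ^ d * ((N:ℝ) ^ d)⁻¹ = 1 := mul_inv_cancel₀ hNd.ne'
  have h5 : (N:ℝ) ^ d * S ≤ (γ : ℝ) * ((A0.card : ℝ) * (Sig.card : ℝ)) * S := by
    calc (N:ℝ) ^ d * S
        ≤ (N:ℝ) ^ d * ((γ : ℝ) * ((A0.card : ℝ) * ((Sig.card : ℝ) * (((N:ℝ) ^ d)⁻¹ * S)))) :=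
          mul_le_mul_of_nonneg_left hmain hNd.le
      _ = (γ : ℝ) * ((A0.card : ℝ) * (Sig.card : ℝ)) * S * ((N:ℝ) ^ d * ((N:ℝ) ^ d)⁻¹) := by ring
      _ = (γ : ℝ) * ((A0.card : ℝ) * (Sig.card : ℝ)) * S := by rw [hinv, mul_one]
  have h6 : (N:ℝ) ^ d ≤ (γ : ℝ) * ((A0.card : ℝ) * (Sig.card : ℝ)) :=
    le_of_mul_le_mul_right h5 hSpos
  have hγ' : (0:ℝ) < γ := by exact_mod_cast hγ
  rw [div_le_iff₀ hγ']
  linarith [h6]
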